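/- Suppose the directed graph G = (V,E) satisfies Condition A: for every F ⊆ V with |F| ≤ f, the induced subgraph G_F has a unique source component S_F with |S_F| ≥ 2f+1, and for every F, F' ⊆ V with |F| ≤ f and |F'| ≤ f, |S_F ∩ S_{F'}| ≥ f+1. Then G satisfies the 2-reach condition with parameter ρ = f+1: for every F1, F2 ⊆ V with |F1| ≤ f and |F2| ≤ f, and every u ∈ V−F1 and v ∈ V−F2, |reach_u(F1) ∩ reach_v(F2)| ≥ f+1. -/

import Mathlib

/-!
Every vertex `u ∉ F` is reached by some source component of `G_F`: among the vertices of
`reach_u(F)` pick one, `w`, whose own reach set is smallest. An edge of `G_F` entering the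
strongly connected component of `w` from `a` would make `reach_a(F) ⊆ reach_w(F)`, hence equal
by minimality, so `w` would reach `a` and `a` would lie in the component. Source components
`S ⊆ reach_u(F₁)` and `S' ⊆ reach_v(F₂)` obtained this way satisfy `|S ∩ S'| ≥ f + 1` by
Condition A.
-/

/-- Edge relation of the induced subgraph `G_F` (both endpoints avoid `F`). -/
def stepRel {V : Type*} (E : V → V → Prop) (F : Set V) (a b : V) : Prop :=
  a ∉ F ∧ b ∉ F ∧ E a b

/-- `reachSet E F u`: vertices `w ∉ F` having a directed path (possibly trivial)
to `u` that uses only vertices outside `F`. -/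
def reachSet {V : Type*} (E : V → V → Prop) (F : Set V) (u : V) : Set V :=
  {w | w ∉ F ∧ Relation.ReflTransGen (stepRel E F) w u}

/-- `S` is a source component of the induced subgraph `G_F`: it is a strongly
connected component of `G_F` (an equivalence class of mutual reachability,
i.e. a maximal mutually-connected set), with no incoming edges of `G_F` from
vertices outside `S`. -/
def IsSourceComponent {V : Type*} (E : V → V → Prop) (F : Set V) (S : Set V) : Prop :=
  (∃ v ∉ F, S = {w | Relation.ReflTransGen (stepRel E F) v w ∧
                     Relation.ReflTransGen (stepRel E F) w v}) ∧
  ∀ a ∉ S, ∀ b ∈ S, ¬ stepRel E F a b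

/-- Condition A: for every `F` with `|F| ≤ f`, the graph `G_F` has a unique
source component `S_F` with `|S_F| ≥ 2f+1`, and the source components
corresponding to any two such sets `F`, `F'` intersect in at least `f+1`
vertices. -/
def ConditionA {V : Type*} (E : V → V → Prop) (f : ℕ) : Prop :=
  (∀ F : Set V, F.ncard ≤ f →
    ∃ S : Set V, IsSourceComponent E F S ∧ 2 * f + 1 ≤ S.ncard ∧
      ∀ S' : Set V, IsSourceComponent E F S' → S' = S) ∧
  (∀ F F' : Set V, F.ncard ≤ f → F'.ncard ≤ f →
    ∀ S S' : Set V, IsSourceComponent E F S → IsSourceComponent E F' S' →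
      f + 1 ≤ (S ∩ S').ncard)

section Reach

variable {V : Type*} {E : V → V → Prop} {F : Set V}

lemma notMem_of_reflTransGen_stepRel {x w : V} (h : Relation.ReflTransGen (stepRel E F) x w)
    (hw : w ∉ F) : x ∉ F := by
  rcases h.cases_head with rfl | ⟨y, hxy, _⟩
  · exact hw
  · exact hxy.1

lemma reachSet_subset_of_reflTransGen {a w : V} (h : Relation.ReflTransGen (stepRel E F) a w) :
    reachSet E F a ⊆ reachSet E F w :=
  fun _ ⟨hxF, hxa⟩ => ⟨hxF, hxa.trans h⟩

lemma isSourceComponent_of_reachSet_minimal {w : V} (hw : w ∉ F)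
    (hmin : ∀ a, Relation.ReflTransGen (stepRel E F) a w →
      reachSet E F a ⊆ reachSet E F w → reachSet E F a = reachSet E F w) :
    IsSourceComponent E F {x | Relation.ReflTransGen (stepRel E F) w x ∧
      Relation.ReflTransGen (stepRel E F) x w} := by
  refine ⟨⟨w, hw, rfl⟩, ?_⟩
  rintro a ha b ⟨hwb, hbw⟩ hab
  have haw : Relation.ReflTransGen (stepRel E F) a w := .head hab hbw
  have hwa : w ∈ reachSet E F a :=
    hmin a haw (reachSet_subset_of_reflTransGen haw) ▸ ⟨hw, .refl⟩
  exact ha ⟨hwa.2, haw⟩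

lemma exists_isSourceComponent_subset_reachSet [Finite V] {u : V} (hu : u ∉ F) :
    ∃ S : Set V, IsSourceComponent E F S ∧ S ⊆ reachSet E F u := by
  obtain ⟨w, ⟨hwF, hwu⟩, hwmin⟩ := Set.exists_min_image (reachSet E F u)
    (fun x => (reachSet E F x).ncard) (Set.toFinite _) ⟨u, hu, .refl⟩
  refine ⟨_, isSourceComponent_of_reachSet_minimal hwF fun a haw hsub => ?_, ?_⟩
  · exact Set.eq_of_subset_of_ncard_le hsub
      (hwmin a ⟨notMem_of_reflTransGen_stepRel haw hwF, haw.trans hwu⟩) (Set.toFinite _)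
  · rintro x ⟨-, hxw⟩
    exact ⟨notMem_of_reflTransGen_stepRel hxw hwF, hxw.trans hwu⟩

end Reach

theorem conditionA_implies_two_reach_fplus1_general {V : Type*} [Fintype V]
    (E : V → V → Prop) (f : ℕ)
    (hCA : ConditionA E f) :
    ∀ F1 F2 : Set V, F1.ncard ≤ f → F2.ncard ≤ f →
      ∀ u ∉ F1, ∀ v ∉ F2,
        f + 1 ≤ (reachSet E F1 u ∩ reachSet E F2 v).ncard := by
  intro F1 F2 hF1 hF2 u hu v hv
  obtain ⟨S1, hS1, hS1u⟩ := exists_isSourceComponent_subset_reachSet (E := E) hu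
  obtain ⟨S2, hS2, hS2v⟩ := exists_isSourceComponent_subset_reachSet (E := E) hv
  calc f + 1 ≤ (S1 ∩ S2).ncard := hCA.2 F1 F2 hF1 hF2 S1 S2 hS1 hS2
    _ ≤ (reachSet E F1 u ∩ reachSet E F2 v).ncard :=
      Set.ncard_le_ncard (Set.inter_subset_inter hS1u hS2v) (Set.toFinite _)

theorem conditionA_implies_two_reach_fplus1 {V : Type*} [Fintype V]
    (E : V → V → Prop) (f : ℕ) (hf : 0 < f) (hfn : f < Fintype.card V)
    (hCA : ConditionA E f) :
    ∀ F1 F2 : Set V, F1.ncard ≤ f → F2.ncard ≤ f →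
      ∀ u ∉ F1, ∀ v ∉ F2,
        f + 1 ≤ (reachSet E F1 u ∩ reachSet E F2 v).ncard :=
  conditionA_implies_two_reach_fplus1_general E f hCA
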